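/- arXiv:1912.03274 — 4 statements merged into one kernel-verified Lean document; each statement's English description precedes it below -/
import Mathlib

section
/- Let Γ₁ and Γ₂ be groups and M a trivial (Γ₁ × Γ₂)-module. Let z ∈ Z²(Γ₁ × Γ₂, M) be a homogeneous 2-cocycle (in inhomogeneous form) satisfying z((γ₁,1),(1,γ₂)) = 0 and z((1,γ₂),(γ₁,1)) = 0 for all γ₁ ∈ Γ₁ and γ₂ ∈ Γ₂. Then z((γ₁,γ₂),(γ₁′,γ₂′)) = z((γ₁,1),(γ₁′,1)) + z((1,γ₂),(1,γ₂′)) for all γ₁,γ₁′ ∈ Γ₁ and γ₂,γ₂′ ∈ Γ₂. -/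
/-!
Write `(γ₁, γ₂) = (γ₁, 1) * (1, γ₂)`. Whenever `z a b = 0`, the cocycle identity at `(a, b, c)`
splits `z (a * b) c` into `z b c + z a (b * c)`; the same happens on the right when `z b c = 0`.
The hypotheses make `z` vanish on every pair with one factor in `Γ₁ × 1` and the other in
`1 × Γ₂`, so repeated splitting discards every mixed term.
-/

section Cocycle

variable {G M : Type*} [Group G] [AddCommGroup M] {z : G → G → M}

theorem cocycle_mul_left_eq_of_eq_zero
    (hz : ∀ g h k : G, z g h + z (g * h) k = z h k + z g (h * k))
    {a b : G} (hab : z a b = 0) (c : G) : z (a * b) c = z b c + z a (b * c) := by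
  simpa [hab] using hz a b c

theorem cocycle_mul_right_eq_of_eq_zero
    (hz : ∀ g h k : G, z g h + z (g * h) k = z h k + z g (h * k))
    {b c : G} (hbc : z b c = 0) (a : G) : z a (b * c) = z a b + z (a * b) c := by
  simpa [hbc] using (hz a b c).symm

end Cocycle

section Product

variable {Γ₁ Γ₂ M : Type*} [Group Γ₁] [Group Γ₂] [AddCommGroup M] {z : Γ₁ × Γ₂ → Γ₁ × Γ₂ → M}

theorem cocycle_inl_mk_eq
    (hcocycle : ∀ g h k : Γ₁ × Γ₂, z g h + z (g * h) k = z h k + z g (h * k))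
    (h1 : ∀ (γ₁ : Γ₁) (γ₂ : Γ₂), z (γ₁, 1) (1, γ₂) = 0)
    (γ₁ γ₁' : Γ₁) (γ₂' : Γ₂) : z (γ₁, 1) (γ₁', γ₂') = z (γ₁, 1) (γ₁', 1) := by
  have h := cocycle_mul_right_eq_of_eq_zero hcocycle (h1 γ₁' γ₂') (γ₁, 1)
  simpa [h1] using h

theorem cocycle_inr_mk_eq
    (hcocycle : ∀ g h k : Γ₁ × Γ₂, z g h + z (g * h) k = z h k + z g (h * k))
    (h1 : ∀ (γ₁ : Γ₁) (γ₂ : Γ₂), z (γ₁, 1) (1, γ₂) = 0)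
    (h2 : ∀ (γ₁ : Γ₁) (γ₂ : Γ₂), z (1, γ₂) (γ₁, 1) = 0)
    (γ₁' : Γ₁) (γ₂ γ₂' : Γ₂) : z (1, γ₂) (γ₁', γ₂') = z (1, γ₂) (1, γ₂') := by
  have split_right := cocycle_mul_right_eq_of_eq_zero hcocycle (h1 γ₁' γ₂') (1, γ₂)
  have split_left := cocycle_mul_left_eq_of_eq_zero hcocycle (h1 γ₁' γ₂) (1, γ₂')
  simp only [Prod.mk_mul_mk, mul_one, one_mul, h1, h2, zero_add, add_zero] at split_right split_left
  rw [split_right, split_left]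

end Product

/-- Let `Γ₁, Γ₂` be groups and `M` a trivial `(Γ₁ × Γ₂)`-module (an additive commutative
group with trivial action).  If `z` is an inhomogeneous 2-cocycle on `Γ₁ × Γ₂` with values
in `M` satisfying `z((γ₁,1),(1,γ₂)) = 0` and `z((1,γ₂),(γ₁,1)) = 0` for all `γ₁, γ₂`, then
`z((γ₁,γ₂),(γ₁',γ₂')) = z((γ₁,1),(γ₁',1)) + z((1,γ₂),(1,γ₂'))`. -/
theorem cocycle_on_product_decomposes
    (Γ₁ Γ₂ : Type) [Group Γ₁] [Group Γ₂]
    (M : Type) [AddCommGroup M]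
    (z : (Γ₁ × Γ₂) → (Γ₁ × Γ₂) → M)
    (hcocycle : ∀ g h k : Γ₁ × Γ₂, z g h + z (g * h) k = z h k + z g (h * k))
    (h1 : ∀ (γ₁ : Γ₁) (γ₂ : Γ₂), z (γ₁, 1) (1, γ₂) = 0)
    (h2 : ∀ (γ₁ : Γ₁) (γ₂ : Γ₂), z (1, γ₂) (γ₁, 1) = 0) :
    ∀ (γ₁ γ₁' : Γ₁) (γ₂ γ₂' : Γ₂),
      z (γ₁, γ₂) (γ₁', γ₂') = z (γ₁, 1) (γ₁', 1) + z (1, γ₂) (1, γ₂') := by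
  intro γ₁ γ₁' γ₂ γ₂'
  calc z (γ₁, γ₂) (γ₁', γ₂')
      = z ((γ₁, 1) * (1, γ₂)) (γ₁', γ₂') := by simp
    _ = z (1, γ₂) (γ₁', γ₂') + z (γ₁, 1) ((1, γ₂) * (γ₁', γ₂')) :=
        cocycle_mul_left_eq_of_eq_zero hcocycle (h1 γ₁ γ₂) _
    _ = z (1, γ₂) (1, γ₂') + z (γ₁, 1) (γ₁', 1) := by
        rw [cocycle_inr_mk_eq hcocycle h1 h2, Prod.mk_mul_mk, one_mul, cocycle_inl_mk_eq hcocycle h1]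
    _ = z (γ₁, 1) (γ₁', 1) + z (1, γ₂) (1, γ₂') := add_comm _ _
end

section
/- Let B be a group, A a normal subgroup with B/A abelian, and let π, π′ be finite-dimensional irreducible complex representations of B, each with semisimple restriction to A, such that Hom_A(π,π′) ≠ 0. Then there exists a character χ of B/A (viewed as a character of B trivial on A) with π′ ≅ χ ⊗ π. -/
open Module

section RepDefs

variable {G : Type} [Group G] {V : Type} [AddCommGroup V] [Module ℂ V]

/-- A submodule is a subrepresentation if it is stable under the group action. -/
def IsSubrep (ρ : Representation ℂ G V) (W : Submodule ℂ V) : Prop :=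
  ∀ g : G, W.map (ρ g) ≤ W

/-- A representation is irreducible if the space is nonzero and the only invariant
submodules are `⊥` and `⊤`. -/
def IsIrred (ρ : Representation ℂ G V) : Prop :=
  Nontrivial V ∧ ∀ W : Submodule ℂ V, IsSubrep ρ W → W = ⊥ ∨ W = ⊤

/-- A representation is semisimple if every subrepresentation admits an invariant
complement (equivalently, the space is the sum of its irreducible subrepresentations). -/
def IsSemisimpleRep (ρ : Representation ℂ G V) : Prop :=
  ∀ W : Submodule ℂ V, IsSubrep ρ W → ∃ W' : Submodule ℂ V, IsSubrep ρ W' ∧ IsCompl W W'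

/-- The representation on an invariant submodule. -/
def subrep (ρ : Representation ℂ G V) (W : Submodule ℂ V) (hW : IsSubrep ρ W) :
    Representation ℂ G W where
  toFun g := (ρ g).restrict (fun x hx => hW g ⟨x, hx, rfl⟩)
  map_one' := by ext x; simp [LinearMap.restrict_apply]
  map_mul' g₁ g₂ := by ext x; simp [LinearMap.restrict_apply]

/-- The space of `G`-equivariant linear maps from `σ` to `ρ`, as a complex subspace. -/
def equivHoms (ρ : Representation ℂ G V) {W : Type} [AddCommGroup W] [Module ℂ W]
    (σ : Representation ℂ G W) : Submodule ℂ (W →ₗ[ℂ] V) where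
  carrier := {φ | ∀ (g : G) (w : W), φ (σ g w) = ρ g (φ w)}
  add_mem' := by
    intro f₁ f₂ h₁ h₂ g w
    simp only [LinearMap.add_apply, map_add, h₁ g w, h₂ g w]
  zero_mem' := by intro g w; simp
  smul_mem' := by
    intro c f hf g w
    simp only [LinearMap.smul_apply, map_smul, hf g w]

/-- Two invariant submodules are isomorphic as subrepresentations if there is an
equivariant linear isomorphism between them. -/
def SubrepIso (ρ : Representation ℂ G V) (W₁ W₂ : Submodule ℂ V)
    (hW₁ : IsSubrep ρ W₁) : Prop :=
  ∃ e : W₁ ≃ₗ[ℂ] W₂,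
    ∀ (g : G) (w : W₁), ((e ⟨ρ g w, hW₁ g ⟨w, w.2, rfl⟩⟩ : W₂) : V) = ρ g (e w)

end RepDefs

/-!
`Hom_A(π, π')` is a nonzero finite-dimensional representation of `B` on which `A` acts
trivially, hence a representation of `B ⧸ A`. As `B ⧸ A` is abelian, its operators commute and
have a common eigenvector `ψ`, whose eigenvalues form a character `χ` of `B ⧸ A`. Then `ψ` is a
nonzero `B`-map from `χ ⊗ π` to `π'`, hence an isomorphism by Schur's lemma.
-/

namespace Module.End

/-- A minimal nonzero subspace stable under all `f i` is an eigenspace of each `f i`: the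
`μ`-eigenspace of `f i` inside it is nonzero and, as the `f j` commute with `f i`, again stable. -/
theorem exists_common_eigenvector_of_commute {K V ι : Type*} [Field K]
    [IsAlgClosed K] [AddCommGroup V] [Module K V] [FiniteDimensional K V] [Nontrivial V]
    (f : ι → End K V) (hf : ∀ i j, Commute (f i) (f j)) :
    ∃ v ≠ 0, ∀ i, ∃ μ : K, f i v = μ • v := by
  let stable : Set (Submodule K V) := {W | W ≠ ⊥ ∧ ∀ i, ∀ x ∈ W, f i x ∈ W}
  obtain ⟨W, ⟨hW, hWf⟩, hmin⟩ :=
    wellFounded_lt.has_min stable ⟨⊤, top_ne_bot, fun _ _ _ => Submodule.mem_top⟩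
  have hscalar : ∀ i, ∃ μ : K, ∀ x ∈ W, f i x = μ • x := by
    intro i
    have : Nontrivial W := Submodule.nontrivial_iff_ne_bot.mpr hW
    obtain ⟨μ, hμ⟩ := exists_eigenvalue ((f i).restrict (hWf i))
    obtain ⟨w, hw⟩ := hμ.exists_hasEigenvector
    have hE : W ⊓ (f i).eigenspace μ ∈ stable := by
      refine ⟨(Submodule.ne_bot_iff _).mpr ⟨w, ⟨w.2, ?_⟩, by simpa using hw.2⟩, ?_⟩
      · simpa [mem_eigenspace_iff, Subtype.ext_iff] using hw.apply_eq_smul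
      · intro j x hx
        obtain ⟨hxW, hx⟩ := Submodule.mem_inf.mp hx
        rw [mem_eigenspace_iff] at hx
        refine ⟨hWf j x hxW, mem_eigenspace_iff.mpr ?_⟩
        rw [← Module.End.mul_apply, (hf i j).eq, Module.End.mul_apply, hx, map_smul]
    have hEW : W ⊓ (f i).eigenspace μ = W := eq_of_le_of_not_lt inf_le_left (hmin _ hE)
    exact ⟨μ, fun x hx => mem_eigenspace_iff.mp (hEW.ge hx).2⟩
  obtain ⟨v, hvW, hv⟩ := (Submodule.ne_bot_iff W).mp hW
  exact ⟨v, hv, fun i => (hscalar i).imp fun _ h => h v hvW⟩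

end Module.End

theorem QuotientGroup.mul_comm_of_commutator_mem {G : Type*} [Group G] {N : Subgroup G}
    [N.Normal] (hN : ∀ g h : G, g * h * g⁻¹ * h⁻¹ ∈ N) (x y : G ⧸ N) : x * y = y * x := by
  induction x using QuotientGroup.induction_on
  induction y using QuotientGroup.induction_on
  rw [← QuotientGroup.mk_mul, ← QuotientGroup.mk_mul, QuotientGroup.eq]
  simpa [mul_assoc] using hN _⁻¹ _⁻¹

namespace Representation

section CommSemiring

variable {k G V : Type*} [CommSemiring k] [Group G] [AddCommMonoid V] [Module k V]

theorem linHom_apply_eq_smul_iff {W : Type*} [AddCommMonoid W] [Module k W]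
    (ρ : Representation k G V) (σ : Representation k G W) (g : G) (f : V →ₗ[k] W) (c : k) :
    linHom ρ σ g f = c • f ↔ ∀ v, c • f (ρ g v) = σ g (f v) := by
  constructor
  · intro h v
    simpa [linHom_apply] using (LinearMap.congr_fun h (ρ g v)).symm
  · intro h
    ext v
    simpa [linHom_apply] using (h (ρ g⁻¹ v)).symm

def twist (χ : G →* kˣ) (ρ : Representation k G V) : Representation k G V where
  toFun g := (χ g : k) • ρ g
  map_one' := by simp
  map_mul' g h := by simp only [map_mul, Units.val_mul, smul_mul_smul_comm]

theorem twist_apply (χ : G →* kˣ) (ρ : Representation k G V) (g : G) (v : V) :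
    twist χ ρ g v = (χ g : k) • ρ g v := rfl

end CommSemiring

section Field

variable {k G V : Type*} [Field k] [Group G] [AddCommGroup V] [Module k V]

theorem exists_character_of_forall_exists_apply_eq_smul (ρ : Representation k G V) {v : V}
    (hv : v ≠ 0) (h : ∀ g, ∃ μ : k, ρ g v = μ • v) : ∃ χ : G →* kˣ, ∀ g, ρ g v = (χ g : k) • v := by
  choose μ hμ using h
  have hinj := smul_left_injective k hv
  let μHom : G →* k :=
    { toFun := μ
      map_one' := hinj <| by simp [← hμ]
      map_mul' := fun g h => hinj <| by
        change μ (g * h) • v = (μ g * μ h) • v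
        rw [← hμ, map_mul, Module.End.mul_apply, hμ, map_smul, hμ, smul_smul, mul_comm] }
  exact ⟨μHom.toHomUnits, hμ⟩

theorem exists_character_and_eigenvector_of_commute [IsAlgClosed k]
    [FiniteDimensional k V] [Nontrivial V] (ρ : Representation k G V)
    (hρ : ∀ g h, Commute (ρ g) (ρ h)) :
    ∃ χ : G →* kˣ, ∃ v ≠ 0, ∀ g, ρ g v = (χ g : k) • v := by
  obtain ⟨v, hv, hμ⟩ := Module.End.exists_common_eigenvector_of_commute ρ hρ
  obtain ⟨χ, hχ⟩ := ρ.exists_character_of_forall_exists_apply_eq_smul hv hμ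
  exact ⟨χ, v, hv, hχ⟩

end Field

section Complex

variable {G V : Type} [Group G] [AddCommGroup V] [Module ℂ V]

theorem isSubrep_twist_iff (χ : G →* ℂˣ) (ρ : Representation ℂ G V) (W : Submodule ℂ V) :
    IsSubrep (twist χ ρ) W ↔ IsSubrep ρ W := by
  simp only [IsSubrep]
  exact forall_congr' fun g => by
    rw [show twist χ ρ g = (χ g : ℂ) • ρ g from rfl, Submodule.map_smul _ _ _ (χ g).ne_zero]

theorem isIrred_twist_iff (χ : G →* ℂˣ) (ρ : Representation ℂ G V) :
    IsIrred (twist χ ρ) ↔ IsIrred ρ := by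
  simp only [IsIrred, isSubrep_twist_iff]

theorem bijective_of_isIrred {V' : Type} [AddCommGroup V'] [Module ℂ V']
    {ρ : Representation ℂ G V} {ρ' : Representation ℂ G V'} (hρ : IsIrred ρ) (hρ' : IsIrred ρ')
    {f : V →ₗ[ℂ] V'} (hf : f ≠ 0) (hfρ : ∀ g v, f (ρ g v) = ρ' g (f v)) :
    Function.Bijective f := by
  have hker : IsSubrep ρ (LinearMap.ker f) := by
    rintro g _ ⟨v, hv, rfl⟩
    simp_all [LinearMap.mem_ker]
  have hrange : IsSubrep ρ' (LinearMap.range f) := by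
    rintro g _ ⟨_, ⟨v, rfl⟩, rfl⟩
    exact ⟨ρ g v, hfρ g v⟩
  refine ⟨LinearMap.ker_eq_bot.mp ((hρ.2 _ hker).resolve_right fun h => hf ?_),
    LinearMap.range_eq_top.mp ((hρ'.2 _ hrange).resolve_left fun h => hf ?_)⟩
  · exact LinearMap.ker_eq_top.mp h
  · exact LinearMap.range_eq_bot.mp h

end Complex

end Representation

open Representation in
theorem twist_by_character_of_quotient_general
    {B : Type} [Group B] (A : Subgroup B) [A.Normal]
    (habQuot : ∀ b₁ b₂ : B, b₁ * b₂ * b₁⁻¹ * b₂⁻¹ ∈ A)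
    {V V' : Type} [AddCommGroup V] [Module ℂ V] [FiniteDimensional ℂ V]
    [AddCommGroup V'] [Module ℂ V'] [FiniteDimensional ℂ V']
    (π : Representation ℂ B V) (π' : Representation ℂ B V')
    (hirr : IsIrred π) (hirr' : IsIrred π')
    (hhom : ∃ φ : V →ₗ[ℂ] V', φ ≠ 0 ∧ ∀ (a : A) (v : V), φ (π a v) = π' a (φ v)) :
    ∃ χ : B →* ℂˣ, (∀ a ∈ A, χ a = 1) ∧
      ∃ e : V ≃ₗ[ℂ] V', ∀ (b : B) (v : V), e ((χ b : ℂ) • π b v) = π' b (e v) := by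
  obtain ⟨φ, hφ, hφA⟩ := hhom
  have hφmem : φ ∈ invariants ((linHom π π').comp A.subtype) := fun a =>
    by simpa using (linHom_apply_eq_smul_iff π π' a φ 1).mpr (by simpa using hφA a)
  have : Nontrivial (invariants ((linHom π π').comp A.subtype)) :=
    Submodule.nontrivial_iff_ne_bot.mpr ((Submodule.ne_bot_iff _).mpr ⟨φ, hφmem, hφ⟩)
  obtain ⟨χ, ψ, hψ, hχψ⟩ :=
    ((linHom π π').quotientToInvariants A).exists_character_and_eigenvector_of_commute
      fun x y => by
        rw [Commute, SemiconjBy, ← map_mul, ← map_mul,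
          QuotientGroup.mul_comm_of_commutator_mem habQuot]
  have hψint : ∀ (b : B) v, (χ b : ℂ) • ψ.1 (π b v) = π' b (ψ.1 v) := fun b =>
    (linHom_apply_eq_smul_iff π π' b ψ.1 _).mp (congrArg Subtype.val (hχψ b))
  have hψbij : Function.Bijective ψ.1 :=
    bijective_of_isIrred ((isIrred_twist_iff (χ.comp (QuotientGroup.mk' A)) π).mpr hirr) hirr'
      (fun h => hψ (Subtype.ext h)) (fun b v => by simpa [twist_apply] using hψint b v)
  refine ⟨χ.comp (QuotientGroup.mk' A), fun a ha => ?_, LinearEquiv.ofBijective ψ.1 hψbij,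
    fun b v => by simpa using hψint b v⟩
  simp [(QuotientGroup.eq_one_iff a).mpr ha]

/-- Let `B` be a group, `A` a normal subgroup with `B/A` abelian, and `π, π′`
finite-dimensional irreducible complex representations of `B` with semisimple
restrictions to `A`.  If `Hom_A(π, π′) ≠ 0` then `π′ ≅ χ ⊗ π` for some character
`χ` of `B/A`, i.e. a character of `B` trivial on `A`. -/
theorem twist_by_character_of_quotient
    {B : Type} [Group B] (A : Subgroup B) [A.Normal]
    (habQuot : ∀ b₁ b₂ : B, b₁ * b₂ * b₁⁻¹ * b₂⁻¹ ∈ A)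
    {V V' : Type} [AddCommGroup V] [Module ℂ V] [FiniteDimensional ℂ V]
    [AddCommGroup V'] [Module ℂ V'] [FiniteDimensional ℂ V']
    (π : Representation ℂ B V) (π' : Representation ℂ B V')
    (hirr : IsIrred π) (hirr' : IsIrred π')
    (hss : IsSemisimpleRep (π.comp A.subtype))
    (hss' : IsSemisimpleRep (π'.comp A.subtype))
    (hhom : ∃ φ : V →ₗ[ℂ] V', φ ≠ 0 ∧ ∀ (a : A) (v : V), φ (π a v) = π' a (φ v)) :
    ∃ χ : B →* ℂˣ, (∀ a ∈ A, χ a = 1) ∧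
      ∃ e : V ≃ₗ[ℂ] V', ∀ (b : B) (v : V), e ((χ b : ℂ) • π b v) = π' b (e v) :=
  twist_by_character_of_quotient_general A habQuot π π' hirr hirr' hhom
end

section
/- Let G be a locally profinite group, N ⊆ G an open normal subgroup with G/N finite abelian, σ a smooth finite-dimensional irreducible representation of N, and N ⊆ H ⊆ G a subgroup to which σ extends. Then H is maximal among subgroups of the stabilizer G_σ to which σ extends if and only if for one (equivalently any) extension σ_H of σ to H, the stabilizer of the isomorphism class of σ_H in G equals H. -/
/-!
Two extensions of `σ` to `H` differ by a scalar on each element (Schur), and the scalar is constant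
on `N`-cosets; since `G/N` is abelian, `g⁻¹ h g ∈ N h`, so the scalars are invariant under
conjugation and all extensions of `σ` to `H` have the same stabilizer. Every element of a subgroup
`H' ⊇ H` to which `σ` extends stabilizes the restriction of that extension to `H`, hence every
extension to `H`. Conversely, if `g` stabilizes an extension `τ` via an intertwiner `e`, and `m` is
the order of `g` modulo `H`, then `τ(g^m)⁻¹ e^m` commutes with `σ`, so is a scalar by Schur;
rescaling `e` by an `m`-th root of its inverse gives `E` with `E^m = τ(g^m)`, and `h g^k ↦ τ(h) E^k`
extends `τ` to the subgroup generated by `H` and `g`.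
-/

open Module

/-- A representation is smooth if every vector has open stabilizer. -/
def IsSmoothRep {G : Type} [Group G] [TopologicalSpace G] {V : Type} [AddCommGroup V]
    [Module ℂ V] (ρ : Representation ℂ G V) : Prop :=
  ∀ v : V, IsOpen {g : G | ρ g v = v}

/-- Conjugation stays in a normal subgroup. -/
theorem conjN_mem {G : Type} [Group G] (N : Subgroup G) [hN : N.Normal] {n : G}
    (hn : n ∈ N) (g : G) : g⁻¹ * n * g ∈ N := by
  simpa using hN.conj_mem n hn g⁻¹

/-- Any subgroup between `N` and `G` is normal when `G/N` is abelian: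
conjugates of elements of `H` stay in `H`. -/
theorem conjH_mem {G : Type} [Group G] (N H : Subgroup G) (hNH : N ≤ H)
    (hab : ∀ x y : G, x * y * x⁻¹ * y⁻¹ ∈ N) {h : G} (hh : h ∈ H) (g : G) :
    g⁻¹ * h * g ∈ H := by
  have h1 : h⁻¹ * g⁻¹ * h⁻¹⁻¹ * g⁻¹⁻¹ ∈ N := hab h⁻¹ g⁻¹
  have h2 : g⁻¹ * h * g = h * (h⁻¹ * g⁻¹ * h⁻¹⁻¹ * g⁻¹⁻¹) := by group
  rw [h2]
  exact H.mul_mem hh (hNH h1)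

theorem normal_of_le_of_commutator_mem {G : Type} [Group G] {N H : Subgroup G} (hNH : N ≤ H)
    (hab : ∀ x y : G, x * y * x⁻¹ * y⁻¹ ∈ N) : H.Normal :=
  ⟨fun h hh g => by simpa using conjH_mem N H hNH hab hh g⁻¹⟩

section CyclicExtension

variable {G M : Type*} [Group G] [Group M] {H : Subgroup G} [H.Normal] {g : G} {ρ : H →* M}
  {E : M}

theorem map_conjNormal_zpow (hE : ∀ h : H, ρ (MulAut.conjNormal g h) = E * ρ h * E⁻¹)
    (k : ℤ) (h : H) : ρ (MulAut.conjNormal (g ^ k) h) = E ^ k * ρ h * (E ^ k)⁻¹ := by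
  induction k using Int.induction_on generalizing h with
  | zero => simp
  | succ k ih => rw [zpow_add_one, map_mul, MulAut.mul_apply, ih, hE]; group
  | pred k ih =>
    have hE' := hE (MulAut.conjNormal g⁻¹ h)
    rw [← MulAut.mul_apply, ← map_mul, mul_inv_cancel, map_one, MulAut.one_apply] at hE'
    have hE_inv : ρ (MulAut.conjNormal g⁻¹ h) = E⁻¹ * ρ h * E := by rw [hE']; group
    rw [zpow_sub_one, map_mul, MulAut.mul_apply, ih, hE_inv]
    group

theorem exists_extension_of_conj_of_zpow
    (hconj : ∀ h : H, ρ (MulAut.conjNormal g h) = E * ρ h * E⁻¹)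
    (hpow : ∀ (d : ℤ) (hd : g ^ d ∈ H), E ^ d = ρ ⟨g ^ d, hd⟩) :
    ∃ (K : Subgroup G) (hHK : H ≤ K), g ∈ K ∧
      ∃ ρ' : K →* M, ρ'.comp (Subgroup.inclusion hHK) = ρ := by
  -- `ρ'` is induced from `H ⋊ ℤ` along `(h, k) ↦ h g^k`, whose kernel `hpow` kills.
  let φ : Multiplicative ℤ →* MulAut H := MulAut.conjNormal.comp (zpowersHom G g)
  let f : H ⋊[φ] Multiplicative ℤ →* G :=
    SemidirectProduct.lift H.subtype (zpowersHom G g) fun k => by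
      ext
      simp only [φ, MonoidHom.comp_apply, zpowersHom_apply, MulEquiv.coe_toMonoidHom,
        Subgroup.coe_subtype, MulAut.conjNormal_apply, MulAut.conj_apply]
  let ψ : H ⋊[φ] Multiplicative ℤ →* M :=
    SemidirectProduct.lift ρ (zpowersHom M E) fun k => by
      ext
      simp only [φ, MonoidHom.comp_apply, zpowersHom_apply, MulEquiv.coe_toMonoidHom,
        map_conjNormal_zpow hconj, MulAut.conj_apply]
  have hker : f.ker ≤ ψ.ker := by
    rintro ⟨h, k⟩ hx
    have hgk : g ^ k.toAdd = (h : G)⁻¹ := eq_inv_of_mul_eq_one_right hx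
    have hgkH : g ^ k.toAdd ∈ H := hgk ▸ H.inv_mem h.2
    have : ρ h * ρ ⟨g ^ k.toAdd, hgkH⟩ = 1 := by
      rw [← map_mul, ← map_one ρ]; congr 1; ext; simp [hgk]
    simpa [ψ, MonoidHom.mem_ker, hpow _ hgkH] using this
  have hHK : H ≤ f.range := fun h hh => ⟨SemidirectProduct.inl ⟨h, hh⟩, by simp [f]⟩
  refine ⟨f.range, hHK, ⟨SemidirectProduct.inr (Multiplicative.ofAdd 1), by simp [f]⟩,
    f.rangeRestrict.liftOfSurjective f.rangeRestrict_surjective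
      ⟨ψ, by rwa [MonoidHom.ker_rangeRestrict]⟩, ?_⟩
  ext h
  have : Subgroup.inclusion hHK h = f.rangeRestrict (SemidirectProduct.inl h) := by
    ext; simp [f]
  rw [MonoidHom.comp_apply, this, MonoidHom.liftOfRightInverse_comp_apply]
  simp [ψ]

end CyclicExtension

section Scalars

variable {V : Type*} [AddCommGroup V] [Module ℂ V]

theorem commute_toModuleAut (u : ℂˣ) (f : V ≃ₗ[ℂ] V) :
    Commute (DistribMulAction.toModuleAut ℂ V u) f :=
  LinearEquiv.ext fun v => by simp [Units.smul_def]

theorem toModuleAut_injective [Nontrivial V] :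
    Function.Injective (DistribMulAction.toModuleAut ℂ V : ℂˣ → V ≃ₗ[ℂ] V) := by
  intro u w huw
  obtain ⟨v, hv⟩ := exists_ne (0 : V)
  have : (u : ℂ) • v = (w : ℂ) • v := LinearEquiv.congr_fun huw v
  exact Units.ext (smul_left_injective ℂ hv this)

end Scalars

section Schur

variable {G V : Type} [Group G] [AddCommGroup V] [Module ℂ V] [FiniteDimensional ℂ V]
  {σ : Representation ℂ G V}

theorem IsIrred.exists_eq_smul (hσ : IsIrred σ) (f : V →ₗ[ℂ] V)
    (hf : ∀ g v, f (σ g v) = σ g (f v)) : ∃ c : ℂ, ∀ v, f v = c • v := by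
  obtain ⟨_, hirr⟩ := hσ
  obtain ⟨c, hc⟩ := Module.End.exists_eigenvalue f
  refine ⟨c, fun v => Module.End.mem_eigenspace_iff.mp ?_⟩
  have hsub : IsSubrep σ (Module.End.eigenspace f c) := by
    rintro g _ ⟨w, hw, rfl⟩
    rw [SetLike.mem_coe, Module.End.mem_eigenspace_iff] at hw
    rw [Module.End.mem_eigenspace_iff, hf, hw, map_smul]
  rw [(hirr _ hsub).resolve_left hc]
  trivial

theorem IsIrred.exists_eq_toModuleAut (hσ : IsIrred σ) (X : V ≃ₗ[ℂ] V)
    (hX : ∀ g v, X (σ g v) = σ g (X v)) : ∃ u : ℂˣ, X = DistribMulAction.toModuleAut ℂ V u := by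
  obtain ⟨c, hc⟩ := hσ.exists_eq_smul X.toLinearMap hX
  have : Nontrivial V := hσ.1
  obtain ⟨v, hv⟩ := exists_ne (0 : V)
  have hc0 : c ≠ 0 := by
    rintro rfl
    exact hv (X.map_eq_zero_iff.mp ((hc v).trans (zero_smul ℂ v)))
  exact ⟨Units.mk0 c hc0, LinearEquiv.ext hc⟩

end Schur

section Stabilizer

variable {G V : Type} [Group G] [AddCommGroup V] [Module ℂ V]

def Representation.asLinearEquivHom {H : Type} [Group H] (τ : Representation ℂ H V) :
    H →* (V ≃ₗ[ℂ] V) :=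
  (LinearMap.GeneralLinearGroup.generalLinearEquiv ℂ V).toMonoidHom.comp τ.asGroupHom

@[simp]
theorem Representation.asLinearEquivHom_apply {H : Type} [Group H] (τ : Representation ℂ H V)
    (h : H) (v : V) : τ.asLinearEquivHom h v = τ h v :=
  rfl

def MemStabilizer {K : Subgroup G} [K.Normal] (τ : Representation ℂ K V) (g : G) : Prop :=
  ∃ e : V ≃ₗ[ℂ] V, ∀ (k : K) (v : V), e (τ ⟨g⁻¹ * k * g, conjN_mem K k.2 g⟩ v) = τ k (e v)

def IsExtension {K L : Subgroup G} (hKL : K ≤ L) (τ : Representation ℂ L V)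
    (σ : Representation ℂ K V) : Prop :=
  ∀ (k : K) (v : V), τ ⟨k, hKL k.2⟩ v = σ k v

def IsMaximalExtensionSubgroup {N H : Subgroup G} [N.Normal] (hNH : N ≤ H)
    (σ : Representation ℂ N V) : Prop :=
  (∀ h ∈ H, MemStabilizer σ h) ∧
    ∀ (H' : Subgroup G) (hHH' : H ≤ H'), (∀ h ∈ H', MemStabilizer σ h) →
      (∃ τ' : Representation ℂ H' V, IsExtension (hNH.trans hHH') τ' σ) → H' = H

theorem IsExtension.trans {K L M : Subgroup G} {hKL : K ≤ L} {hLM : L ≤ M}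
    {ρ : Representation ℂ M V} {τ : Representation ℂ L V} {σ : Representation ℂ K V}
    (hρ : IsExtension hLM ρ τ) (hτ : IsExtension hKL τ σ) :
    IsExtension (hKL.trans hLM) ρ σ :=
  fun k v => (hρ _ v).trans (hτ k v)

theorem MemStabilizer.exists_conj_eq {K : Subgroup G} [K.Normal] {τ : Representation ℂ K V}
    {g : G} (hg : MemStabilizer τ g) :
    ∃ e : V ≃ₗ[ℂ] V, ∀ k : K,
      τ.asLinearEquivHom (MulAut.conjNormal g k) = e * τ.asLinearEquivHom k * e⁻¹ := by
  obtain ⟨e, he⟩ := hg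
  refine ⟨e, fun k => eq_mul_inv_of_mul_eq (LinearEquiv.ext fun v => ?_)⟩
  simpa [MulAut.conjNormal_apply, mul_assoc] using (he (MulAut.conjNormal g k) v).symm

theorem memStabilizer_of_isExtension {K L : Subgroup G} [K.Normal] {hKL : K ≤ L}
    {τ : Representation ℂ L V} {σ : Representation ℂ K V} (hτ : IsExtension hKL τ σ) {g : G}
    (hg : g ∈ L) : MemStabilizer σ g := by
  refine ⟨τ.asLinearEquivHom ⟨g, hg⟩, fun k v => ?_⟩
  rw [Representation.asLinearEquivHom_apply, Representation.asLinearEquivHom_apply, ← hτ, ← hτ,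
    ← Module.End.mul_apply, ← map_mul, ← Module.End.mul_apply, ← map_mul]
  congr 2
  ext
  simp [mul_assoc]

end Stabilizer

section Extension

variable {G V : Type} [Group G] [AddCommGroup V] [Module ℂ V] [FiniteDimensional ℂ V]
  {N H : Subgroup G} {hNH : N ≤ H} {σ : Representation ℂ N V}

theorem exists_toModuleAut_mul_pow_eq [H.Normal] (hσ : IsIrred σ) {ρ : H →* (V ≃ₗ[ℂ] V)}
    (hρ : ∀ (n : N) (v : V), ρ ⟨n, hNH n.2⟩ v = σ n v) {g : G} {e : V ≃ₗ[ℂ] V}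
    (he : ∀ h : H, ρ (MulAut.conjNormal g h) = e * ρ h * e⁻¹) {m : ℕ} (hm : 0 < m)
    (hgm : g ^ m ∈ H) :
    ∃ u : ℂˣ, (DistribMulAction.toModuleAut ℂ V u * e) ^ m = ρ ⟨g ^ m, hgm⟩ := by
  set X := (ρ ⟨g ^ m, hgm⟩)⁻¹ * e ^ m
  have hX : ∀ h : H, X * ρ h = ρ h * X := by
    intro h
    have hconj := map_conjNormal_zpow he m h
    have : MulAut.conjNormal (g ^ (m : ℤ)) h = ⟨g ^ m, hgm⟩ * h * ⟨g ^ m, hgm⟩⁻¹ := by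
      ext
      rw [MulAut.conjNormal_apply, zpow_natCast]
      rfl
    rw [this, map_mul, map_mul, map_inv, zpow_natCast] at hconj
    simp only [X, mul_assoc, inv_mul_eq_iff_eq_mul]
    rw [← mul_assoc, ← mul_assoc, ← mul_inv_eq_iff_eq_mul.mpr hconj.symm]
    group
  obtain ⟨u, hu⟩ := hσ.exists_eq_toModuleAut X fun n v => by
    rw [← hρ, ← hρ]
    exact LinearEquiv.congr_fun (hX _) v
  obtain ⟨ζ, hζ⟩ := IsAlgClosed.exists_pow_nat_eq ((u⁻¹ : ℂˣ) : ℂ) hm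
  have hζ0 : ζ ≠ 0 := by
    rintro rfl
    exact (u⁻¹).ne_zero (by rw [← hζ, zero_pow hm.ne'])
  have hζu : Units.mk0 ζ hζ0 ^ m = u⁻¹ := Units.ext (by simpa using hζ)
  refine ⟨Units.mk0 ζ hζ0, ?_⟩
  rw [(commute_toModuleAut _ e).mul_pow, ← map_pow, hζu, eq_mul_of_inv_mul_eq hu, map_inv,
    ← (commute_toModuleAut u _).eq]
  group

theorem MemStabilizer.exists_isExtension [Finite (G ⧸ N)] [H.Normal] (hσ : IsIrred σ)
    {τ : Representation ℂ H V} (hτ : IsExtension hNH τ σ) {g : G} (hg : MemStabilizer τ g) :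
    ∃ (K : Subgroup G) (hHK : H ≤ K), g ∈ K ∧
      ∃ τ' : Representation ℂ K V, IsExtension hHK τ' τ := by
  have : N.FiniteIndex := Subgroup.finiteIndex_of_finite_quotient
  have : H.FiniteIndex := Subgroup.finiteIndex_of_le hNH
  obtain ⟨e, he⟩ := hg.exists_conj_eq
  set m := orderOf (g : G ⧸ H)
  have hgm : g ^ m ∈ H := by
    rw [← QuotientGroup.eq_one_iff, QuotientGroup.mk_pow]
    exact pow_orderOf_eq_one _
  obtain ⟨u, hu⟩ := exists_toModuleAut_mul_pow_eq (hNH := hNH) hσ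
    (fun n v => (τ.asLinearEquivHom_apply _ v).trans (hτ n v)) he (orderOf_pos _) hgm
  set t := DistribMulAction.toModuleAut ℂ V u
  set E := t * e
  have hconj : ∀ h : H, τ.asLinearEquivHom (MulAut.conjNormal g h) =
      E * τ.asLinearEquivHom h * E⁻¹ := by
    intro h
    rw [he, show E * τ.asLinearEquivHom h * E⁻¹ = t * (e * τ.asLinearEquivHom h * e⁻¹) * t⁻¹
      by simp only [E]; group, (commute_toModuleAut u _).mul_inv_cancel]
  have hpow : ∀ (d : ℤ) (hd : g ^ d ∈ H), E ^ d = τ.asLinearEquivHom ⟨g ^ d, hd⟩ := by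
    intro d hd
    obtain ⟨j, rfl⟩ : (m : ℤ) ∣ d := by
      rwa [orderOf_dvd_iff_zpow_eq_one, ← QuotientGroup.mk_zpow, QuotientGroup.eq_one_iff]
    rw [zpow_mul, zpow_natCast, hu, ← map_zpow]
    congr 1
    ext
    simp [m, zpow_mul]
  obtain ⟨K, hHK, hgK, ρ', hρ'⟩ := exists_extension_of_conj_of_zpow hconj hpow
  exact ⟨K, hHK, hgK, LinearEquiv.automorphismGroup.toLinearMapMonoidHom.comp ρ',
    fun h v => LinearEquiv.congr_fun (DFunLike.congr_fun hρ' h) v⟩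

end Extension

section Transfer

variable {G V : Type} [Group G] [AddCommGroup V] [Module ℂ V] [FiniteDimensional ℂ V]
  {N H : Subgroup G} [N.Normal] {hNH : N ≤ H} {σ : Representation ℂ N V}
  {τ₁ τ₂ : Representation ℂ H V}

theorem IsExtension.exists_eq_toModuleAut_mul (hσ : IsIrred σ) (h₁ : IsExtension hNH τ₁ σ)
    (h₂ : IsExtension hNH τ₂ σ) (h : H) :
    ∃ u : ℂˣ, τ₂.asLinearEquivHom h =
      DistribMulAction.toModuleAut ℂ V u * τ₁.asLinearEquivHom h := by
  set ρ₁ := τ₁.asLinearEquivHom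
  set ρ₂ := τ₂.asLinearEquivHom
  have hN : ∀ n : N, ρ₁ ⟨n, hNH n.2⟩ = ρ₂ ⟨n, hNH n.2⟩ :=
    fun n => LinearEquiv.ext fun v => (h₁ n v).trans (h₂ n v).symm
  obtain ⟨u, hu⟩ := hσ.exists_eq_toModuleAut (ρ₂ h * (ρ₁ h)⁻¹) fun n v => by
    let n' : N := ⟨(h : G)⁻¹ * n * h, conjN_mem N n.2 h⟩
    have hn' : (⟨n, hNH n.2⟩ : H) = h * ⟨n', hNH n'.2⟩ * h⁻¹ := by ext; simp [n', mul_assoc]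
    have hcomm : ρ₂ h * (ρ₁ h)⁻¹ * ρ₁ ⟨n, hNH n.2⟩ = ρ₂ ⟨n, hNH n.2⟩ * (ρ₂ h * (ρ₁ h)⁻¹) := by
      rw [hn', map_mul, map_mul, map_mul, map_mul, hN n', map_inv, map_inv]
      group
    rw [← h₁ n v, ← h₂ n]
    exact LinearEquiv.congr_fun hcomm v
  exact ⟨u, by rw [← hu, inv_mul_cancel_right]⟩

theorem MemStabilizer.of_isExtension [H.Normal] (hab : ∀ x y : G, x * y * x⁻¹ * y⁻¹ ∈ N)
    (hσ : IsIrred σ) (h₁ : IsExtension hNH τ₁ σ) (h₂ : IsExtension hNH τ₂ σ) {g : G}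
    (hg : MemStabilizer τ₁ g) : MemStabilizer τ₂ g := by
  choose χ hχ using IsExtension.exists_eq_toModuleAut_mul hσ h₁ h₂
  have : Nontrivial V := hσ.1
  have hχ_coset : ∀ (n : N) (h : H), χ (⟨n, hNH n.2⟩ * h) = χ h := by
    intro n h
    apply toModuleAut_injective (V := V)
    apply mul_right_cancel (b := τ₁.asLinearEquivHom (⟨n, hNH n.2⟩ * h))
    have hN : τ₂.asLinearEquivHom ⟨n, hNH n.2⟩ = τ₁.asLinearEquivHom ⟨n, hNH n.2⟩ :=
      LinearEquiv.ext fun v => (h₂ n v).trans (h₁ n v).symm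
    rw [← hχ, map_mul, map_mul, hχ h, hN, ← mul_assoc, ← (commute_toModuleAut _ _).eq,
      mul_assoc]
  obtain ⟨e, he⟩ := hg
  refine ⟨e, fun h v => ?_⟩
  let n : N := ⟨g⁻¹ * h * g * (h : G)⁻¹, by simpa using hab g⁻¹ h⟩
  have hconj : (⟨g⁻¹ * h * g, conjN_mem H h.2 g⟩ : H) = ⟨n, hNH n.2⟩ * h := by
    ext; simp [n]
  have hχv : ∀ (k : H) (v : V), τ₂ k v = (χ k : ℂ) • τ₁ k v :=
    fun k v => LinearEquiv.congr_fun (hχ k) v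
  rw [hχv, hχv, map_smul, he, ← hχ_coset _ h, ← hconj]

end Transfer

section Maximality

variable {G V : Type} [Group G] [AddCommGroup V] [Module ℂ V] [FiniteDimensional ℂ V]
  {N H : Subgroup G} [N.Normal] {hNH : N ≤ H} {σ : Representation ℂ N V}

theorem IsMaximalExtensionSubgroup.memStabilizer_iff [Finite (G ⧸ N)] [H.Normal]
    (hH : IsMaximalExtensionSubgroup hNH σ) (hσ : IsIrred σ) {τ : Representation ℂ H V}
    (hτ : IsExtension hNH τ σ) (g : G) : MemStabilizer τ g ↔ g ∈ H := by
  refine ⟨fun hg => ?_, fun hg => memStabilizer_of_isExtension (hKL := le_rfl) (fun _ _ => rfl) hg⟩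
  obtain ⟨K, hHK, hgK, τ', hτ'⟩ := hg.exists_isExtension hσ hτ
  have hKσ := hτ'.trans hτ
  rw [← hH.2 K hHK (fun _ => memStabilizer_of_isExtension hKσ) ⟨τ', hKσ⟩]
  exact hgK

theorem isMaximalExtensionSubgroup_of_memStabilizer_iff [H.Normal]
    (hab : ∀ x y : G, x * y * x⁻¹ * y⁻¹ ∈ N) (hσ : IsIrred σ) {τ : Representation ℂ H V}
    (hτ : IsExtension hNH τ σ) (hstab : ∀ g, MemStabilizer τ g ↔ g ∈ H) :
    IsMaximalExtensionSubgroup hNH σ := by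
  refine ⟨fun _ => memStabilizer_of_isExtension hτ, fun H' hHH' _ ⟨τ', hτ'⟩ => ?_⟩
  refine le_antisymm (fun x hx => (hstab x).1 ?_) hHH'
  have hres : IsExtension hHH' τ' (τ'.comp (Subgroup.inclusion hHH')) := fun _ _ => rfl
  have hres_σ : IsExtension hNH (τ'.comp (Subgroup.inclusion hHH')) σ := hτ'
  exact (memStabilizer_of_isExtension hres hx).of_isExtension hab hσ hres_σ hτ

end Maximality

theorem maximal_extension_iff_selfstabilizing_general
    {G : Type} [Group G]
    (N : Subgroup G) [N.Normal]
    [Finite (G ⧸ N)] (habQuot : ∀ x y : G, x * y * x⁻¹ * y⁻¹ ∈ N)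
    {V : Type} [AddCommGroup V] [Module ℂ V] [FiniteDimensional ℂ V]
    (σ : Representation ℂ N V) (hirr : IsIrred σ)
    (H : Subgroup G) (hNH : N ≤ H)
    (hext : ∃ τ : Representation ℂ H V,
      ∀ (n : N) (v : V), τ ⟨↑n, hNH n.2⟩ v = σ n v) :
    -- maximality of H among subgroups of G_σ to which σ extends:
    (((∀ h ∈ H, ∃ e : V ≃ₗ[ℂ] V, ∀ (n : N) (v : V),
          e (σ ⟨h⁻¹ * ↑n * h, conjN_mem N n.2 h⟩ v) = σ n (e v)) ∧
      ∀ H' : Subgroup G, ∀ hHH' : H ≤ H',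
        (∀ h ∈ H', ∃ e : V ≃ₗ[ℂ] V, ∀ (n : N) (v : V),
          e (σ ⟨h⁻¹ * ↑n * h, conjN_mem N n.2 h⟩ v) = σ n (e v)) →
        (∃ τ' : Representation ℂ H' V,
          ∀ (n : N) (v : V), τ' ⟨↑n, (hNH.trans hHH') n.2⟩ v = σ n v) →
        H' = H) ↔
      -- ... iff any extension σ_H has stabilizer exactly H:
      (∀ τ : Representation ℂ H V,
        (∀ (n : N) (v : V), τ ⟨↑n, hNH n.2⟩ v = σ n v) →
        ∀ g : G,
          (∃ e : V ≃ₗ[ℂ] V, ∀ (h : H) (v : V),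
            e (τ ⟨g⁻¹ * ↑h * g, conjH_mem N H hNH habQuot h.2 g⟩ v) = τ h (e v)) ↔
          g ∈ H)) ∧
    -- ... iff some extension σ_H has stabilizer exactly H:
    (((∀ h ∈ H, ∃ e : V ≃ₗ[ℂ] V, ∀ (n : N) (v : V),
          e (σ ⟨h⁻¹ * ↑n * h, conjN_mem N n.2 h⟩ v) = σ n (e v)) ∧
      ∀ H' : Subgroup G, ∀ hHH' : H ≤ H',
        (∀ h ∈ H', ∃ e : V ≃ₗ[ℂ] V, ∀ (n : N) (v : V),
          e (σ ⟨h⁻¹ * ↑n * h, conjN_mem N n.2 h⟩ v) = σ n (e v)) →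
        (∃ τ' : Representation ℂ H' V,
          ∀ (n : N) (v : V), τ' ⟨↑n, (hNH.trans hHH') n.2⟩ v = σ n v) →
        H' = H) ↔
      (∃ τ : Representation ℂ H V,
        (∀ (n : N) (v : V), τ ⟨↑n, hNH n.2⟩ v = σ n v) ∧
        ∀ g : G,
          (∃ e : V ≃ₗ[ℂ] V, ∀ (h : H) (v : V),
            e (τ ⟨g⁻¹ * ↑h * g, conjH_mem N H hNH habQuot h.2 g⟩ v) = τ h (e v)) ↔
          g ∈ H)) := by
  have : H.Normal := normal_of_le_of_commutator_mem hNH habQuot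
  obtain ⟨τ₀, hτ₀⟩ := hext
  have hself : IsMaximalExtensionSubgroup hNH σ →
      ∀ τ, IsExtension hNH τ σ → ∀ g, MemStabilizer τ g ↔ g ∈ H :=
    fun hH _ hτ => hH.memStabilizer_iff hirr hτ
  have hmax : ∀ τ, IsExtension hNH τ σ → (∀ g, MemStabilizer τ g ↔ g ∈ H) →
      IsMaximalExtensionSubgroup hNH σ :=
    fun _ hτ => isMaximalExtensionSubgroup_of_memStabilizer_iff habQuot hirr hτ
  exact ⟨⟨hself, fun h => hmax τ₀ hτ₀ (h τ₀ hτ₀)⟩,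
    ⟨fun hH => ⟨τ₀, hτ₀, hself hH τ₀ hτ₀⟩, fun ⟨τ, hτ, h⟩ => hmax τ hτ h⟩⟩

/-- Let `G` be locally profinite, `N ⊆ G` open normal with `G/N` finite abelian, `σ` a
smooth finite-dimensional irreducible representation of `N`, and `N ⊆ H ⊆ G` a subgroup
to which `σ` extends.  Then `H` is maximal among subgroups of the stabilizer `G_σ` to
which `σ` extends if and only if for one (equivalently, any) extension `σ_H` of `σ`
to `H`, the stabilizer of the isomorphism class of `σ_H` equals `H`. -/
theorem maximal_extension_iff_selfstabilizing
    {G : Type} [Group G] [TopologicalSpace G] [IsTopologicalGroup G]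
    [LocallyCompactSpace G] [TotallyDisconnectedSpace G]
    (N : Subgroup G) [N.Normal] (hNopen : IsOpen (N : Set G))
    [Finite (G ⧸ N)] (habQuot : ∀ x y : G, x * y * x⁻¹ * y⁻¹ ∈ N)
    {V : Type} [AddCommGroup V] [Module ℂ V] [FiniteDimensional ℂ V]
    (σ : Representation ℂ N V) (hsm : IsSmoothRep σ) (hirr : IsIrred σ)
    (H : Subgroup G) (hNH : N ≤ H)
    (hext : ∃ τ : Representation ℂ H V,
      ∀ (n : N) (v : V), τ ⟨↑n, hNH n.2⟩ v = σ n v) :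
    -- maximality of H among subgroups of G_σ to which σ extends:
    (((∀ h ∈ H, ∃ e : V ≃ₗ[ℂ] V, ∀ (n : N) (v : V),
          e (σ ⟨h⁻¹ * ↑n * h, conjN_mem N n.2 h⟩ v) = σ n (e v)) ∧
      ∀ H' : Subgroup G, ∀ hHH' : H ≤ H',
        (∀ h ∈ H', ∃ e : V ≃ₗ[ℂ] V, ∀ (n : N) (v : V),
          e (σ ⟨h⁻¹ * ↑n * h, conjN_mem N n.2 h⟩ v) = σ n (e v)) →
        (∃ τ' : Representation ℂ H' V,
          ∀ (n : N) (v : V), τ' ⟨↑n, (hNH.trans hHH') n.2⟩ v = σ n v) →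
        H' = H) ↔
      -- ... iff any extension σ_H has stabilizer exactly H:
      (∀ τ : Representation ℂ H V,
        (∀ (n : N) (v : V), τ ⟨↑n, hNH n.2⟩ v = σ n v) →
        ∀ g : G,
          (∃ e : V ≃ₗ[ℂ] V, ∀ (h : H) (v : V),
            e (τ ⟨g⁻¹ * ↑h * g, conjH_mem N H hNH habQuot h.2 g⟩ v) = τ h (e v)) ↔
          g ∈ H)) ∧
    -- ... iff some extension σ_H has stabilizer exactly H:
    (((∀ h ∈ H, ∃ e : V ≃ₗ[ℂ] V, ∀ (n : N) (v : V),
          e (σ ⟨h⁻¹ * ↑n * h, conjN_mem N n.2 h⟩ v) = σ n (e v)) ∧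
      ∀ H' : Subgroup G, ∀ hHH' : H ≤ H',
        (∀ h ∈ H', ∃ e : V ≃ₗ[ℂ] V, ∀ (n : N) (v : V),
          e (σ ⟨h⁻¹ * ↑n * h, conjN_mem N n.2 h⟩ v) = σ n (e v)) →
        (∃ τ' : Representation ℂ H' V,
          ∀ (n : N) (v : V), τ' ⟨↑n, (hNH.trans hHH') n.2⟩ v = σ n v) →
        H' = H) ↔
      (∃ τ : Representation ℂ H V,
        (∀ (n : N) (v : V), τ ⟨↑n, hNH n.2⟩ v = σ n v) ∧
        ∀ g : G,
          (∃ e : V ≃ₗ[ℂ] V, ∀ (h : H) (v : V),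
            e (τ ⟨g⁻¹ * ↑h * g, conjH_mem N H hNH habQuot h.2 g⟩ v) = τ h (e v)) ↔
          g ∈ H)) :=
  maximal_extension_iff_selfstabilizing_general N habQuot σ hirr H hNH hext
end

section
/- Let G be a locally profinite group, N ⊆ G an open normal subgroup with G/N finite abelian, and σ, σ′ smooth finite-dimensional irreducible representations of N. Then Ind_N^G σ and Ind_N^G σ′ are either disjoint (share no irreducible constituent) or isomorphic, and they are isomorphic if and only if σ′ ≅ σ∘Ad(g) for some g ∈ G. -/
open Module

section IndDefs

variable {G : Type} [Group G] {V : Type} [AddCommGroup V] [Module ℂ V]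

/-- The carrier of the induced representation `Ind_N^G σ`:
functions `f : G → V` with `f(ng) = σ(n) f(g)`. -/
def indCarrier (N : Subgroup G) (σ : Representation ℂ N V) : Submodule ℂ (G → V) where
  carrier := {f | ∀ (h : N) (g : G), f (↑h * g) = σ h (f g)}
  add_mem' := by
    intro f₁ f₂ h₁ h₂ h g
    simp only [Pi.add_apply, map_add, h₁ h g, h₂ h g]
  zero_mem' := by intro h g; simp
  smul_mem' := by
    intro c f hf h g
    simp only [Pi.smul_apply, map_smul, hf h g]

/-- The induced representation `Ind_N^G σ`, with `G` acting by right translation. -/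
def indRep (N : Subgroup G) (σ : Representation ℂ N V) :
    Representation ℂ G (indCarrier N σ) where
  toFun g :=
    { toFun := fun f => ⟨fun x => (f : G → V) (x * g), fun h x => by
        have := f.2 h (x * g); simpa [mul_assoc] using this⟩
      map_add' := by intro f₁ f₂; ext x; simp
      map_smul' := by intro c f; ext x; simp }
  map_one' := by ext f x; simp
  map_mul' g₁ g₂ := by ext f x; simp [mul_assoc]

end IndDefs

/-!
Restricted to `N`, `Ind_N^G σ` is the direct sum over `G ⧸ N` of the conjugates `σ ∘ Ad(g)`:
every `f` is the sum of its restrictions to the cosets, and each of these is a right translate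
of an extension by zero of a vector of `σ`. So a nonzero `G`-map `φ : Ind σ → Ind σ'`,
precomposed with extension by zero and followed by evaluation at a suitable point `k`, is a
nonzero `N`-map from `σ ∘ Ad(k)` to `σ'`, hence an isomorphism by Schur's lemma. Conversely,
`σ' ≅ σ ∘ Ad(g)` together with left translation by `g` gives `Ind σ ≅ Ind σ'`. In particular a
nonzero map between the induced representations already forces them to be isomorphic.
-/

section

variable {V V' : Type} [AddCommGroup V] [Module ℂ V] [AddCommGroup V'] [Module ℂ V']

section Intertwining

variable {H : Type} [Group H]

theorem IsIrred.comp_surjective {K : Type} [Group K] {ρ : Representation ℂ H V}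
    (hρ : IsIrred ρ) {α : K →* H} (hα : Function.Surjective α) :
    IsIrred (ρ.comp α) :=
  ⟨hρ.1, fun W hW => hρ.2 W fun h => by obtain ⟨k, rfl⟩ := hα h; exact hW k⟩

theorem bijective_of_intertwining_of_ne_zero {ρ : Representation ℂ H V}
    {ρ' : Representation ℂ H V'} (hρ : IsIrred ρ) (hρ' : IsIrred ρ') {B : V →ₗ[ℂ] V'}
    (hB : B ≠ 0) (hBρ : ∀ h v, B (ρ h v) = ρ' h (B v)) : Function.Bijective B := by
  have hker : IsSubrep ρ (LinearMap.ker B) := by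
    rintro h _ ⟨v, hv, rfl⟩
    simp_all [LinearMap.mem_ker]
  have hrange : IsSubrep ρ' (LinearMap.range B) := by
    rintro h _ ⟨_, ⟨v, rfl⟩, rfl⟩
    exact ⟨ρ h v, hBρ h v⟩
  refine ⟨?_, ?_⟩
  · rw [← LinearMap.ker_eq_bot]
    exact (hρ.2 _ hker).resolve_right (mt LinearMap.ker_eq_top.mp hB)
  · rw [← LinearMap.range_eq_top]
    exact (hρ'.2 _ hrange).resolve_left (mt LinearMap.range_eq_bot.mp hB)

theorem symm_intertwining {ρ : Representation ℂ H V} {ρ' : Representation ℂ H V'}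
    (e : V ≃ₗ[ℂ] V') (he : ∀ h v, e (ρ h v) = ρ' h (e v)) (h : H) (w : V') :
    e.symm (ρ' h w) = ρ h (e.symm w) :=
  e.symm_apply_eq.mpr (by rw [he, e.apply_symm_apply])

end Intertwining

variable {G : Type} [Group G] (N : Subgroup G)

section Conjugation

variable [N.Normal]

def conjHom (g : G) : N →* N where
  toFun n := ⟨g⁻¹ * n * g, conjN_mem N n.2 g⟩
  map_one' := by ext; simp
  map_mul' n m := by ext; simp only [Subgroup.coe_mul]; group

theorem conjHom_conjHom_inv (g : G) (n : N) : conjHom N g (conjHom N g⁻¹ n) = n := by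
  ext; simp only [conjHom, MonoidHom.coe_mk, OneHom.coe_mk]; group

theorem conjHom_surjective (g : G) : Function.Surjective (conjHom N g) :=
  fun n => ⟨_, conjHom_conjHom_inv N g n⟩

end Conjugation

section Induction

variable {N} {σ : Representation ℂ N V}

@[simp]
theorem indRep_apply (g : G) (f : indCarrier N σ) (x : G) :
    (indRep N σ g f : G → V) x = (f : G → V) (x * g) :=
  rfl

theorem indCarrier_apply_mul (f : indCarrier N σ) (n : N) (x : G) :
    (f : G → V) (n * x) = σ n ((f : G → V) x) :=
  f.2 n x

variable (N σ) in
def indEval (x : G) : indCarrier N σ →ₗ[ℂ] V :=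
  (LinearMap.proj x).comp (indCarrier N σ).subtype

open Classical in
variable (N σ) in
noncomputable def indExtZero : V →ₗ[ℂ] indCarrier N σ :=
  (LinearMap.pi fun x => if h : x ∈ N then σ ⟨x, h⟩ else 0).codRestrict _ fun v n x => by
    show (if h : n * x ∈ N then σ ⟨n * x, h⟩ else 0) v
      = σ n ((if h : x ∈ N then σ ⟨x, h⟩ else 0) v)
    by_cases hx : x ∈ N
    · rw [dif_pos hx, dif_pos (mul_mem n.2 hx), ← Module.End.mul_apply, ← map_mul]
      rfl
    · rw [dif_neg hx, dif_neg (mt (N.mul_mem_cancel_left n.2).mp hx)]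
      simp

open Classical in
theorem indExtZero_apply (v : V) (x : G) :
    (indExtZero N σ v : G → V) x = if h : x ∈ N then σ ⟨x, h⟩ v else 0 := by
  show (if h : x ∈ N then σ ⟨x, h⟩ else 0) v = _
  split_ifs <;> rfl

theorem indExtZero_apply_one (v : V) : (indExtZero N σ v : G → V) 1 = v := by
  rw [indExtZero_apply, dif_pos N.one_mem]
  exact congr_arg (· v) σ.map_one

theorem indExtZero_intertwining (n : N) (v : V) :
    indExtZero N σ (σ n v) = indRep N σ n (indExtZero N σ v) := by
  ext x
  simp only [indExtZero_apply, indRep_apply]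
  by_cases hx : x ∈ N
  · rw [dif_pos hx, dif_pos (mul_mem hx n.2), ← Module.End.mul_apply, ← map_mul]
    rfl
  · rw [dif_neg hx, dif_neg (mt (N.mul_mem_cancel_right n.2).mp hx)]

theorem indExtZero_injective : Function.Injective (indExtZero N σ) :=
  Function.LeftInverse.injective (g := indEval N σ 1) indExtZero_apply_one

theorem indCarrier_nontrivial [Nontrivial V] : Nontrivial (indCarrier N σ) :=
  (indExtZero_injective (σ := σ)).nontrivial

end Induction

section Decomposition

variable {N} [N.Normal] {σ : Representation ℂ N V}

theorem mul_inv_out_mem_iff (x : G) (c : G ⧸ N) : x * c.out⁻¹ ∈ N ↔ (x : G ⧸ N) = c := by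
  rw [← div_eq_mul_inv, ← QuotientGroup.eq_iff_div_mem, QuotientGroup.out_eq']

theorem sum_indRep_indExtZero [Fintype (G ⧸ N)] (f : indCarrier N σ) :
    ∑ c : G ⧸ N, indRep N σ c.out⁻¹ (indExtZero N σ ((f : G → V) c.out)) = f := by
  ext x
  rw [Submodule.coe_sum, Finset.sum_apply,
    Finset.sum_eq_single_of_mem (x : G ⧸ N) (Finset.mem_univ _)]
  · rw [indRep_apply, indExtZero_apply, dif_pos ((mul_inv_out_mem_iff x _).mpr rfl),
      ← indCarrier_apply_mul, inv_mul_cancel_right]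
  · intro c _ hc
    rw [indRep_apply, indExtZero_apply, dif_neg (mt (mul_inv_out_mem_iff x c).mp (Ne.symm hc))]

end Decomposition

section Mackey

variable {N} [N.Normal] {σ : Representation ℂ N V} {σ' : Representation ℂ N V'}

theorem indEval_comp_indExtZero_intertwining {φ : indCarrier N σ →ₗ[ℂ] indCarrier N σ'}
    (hφ : ∀ (g : G) (f : indCarrier N σ), φ (indRep N σ g f) = indRep N σ' g (φ f))
    (k : G) (n : N) (v : V) :
    (indEval N σ' k ∘ₗ φ ∘ₗ indExtZero N σ) (σ (conjHom N k n) v)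
      = σ' n ((indEval N σ' k ∘ₗ φ ∘ₗ indExtZero N σ) v) := by
  have hk : k * (conjHom N k n : G) = n * k := by
    simp only [conjHom, MonoidHom.coe_mk, OneHom.coe_mk]; group
  change (φ (indExtZero N σ (σ _ v)) : G → V') k
    = σ' n ((φ (indExtZero N σ v) : G → V') k)
  rw [indExtZero_intertwining, hφ, indRep_apply, hk, indCarrier_apply_mul]

theorem exists_indEval_comp_indExtZero_ne_zero [Finite (G ⧸ N)]
    {φ : indCarrier N σ →ₗ[ℂ] indCarrier N σ'} (hφ0 : φ ≠ 0)
    (hφ : ∀ (g : G) (f : indCarrier N σ), φ (indRep N σ g f) = indRep N σ' g (φ f)) :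
    ∃ k : G, indEval N σ' k ∘ₗ φ ∘ₗ indExtZero N σ ≠ 0 := by
  have := Fintype.ofFinite (G ⧸ N)
  by_contra! h
  refine hφ0 (LinearMap.ext fun f => Subtype.ext (funext fun x => ?_))
  rw [← sum_indRep_indExtZero f, map_sum, Submodule.coe_sum, Finset.sum_apply]
  refine Finset.sum_eq_zero fun c _ => ?_
  rw [hφ, indRep_apply]
  exact LinearMap.congr_fun (h (x * c.out⁻¹)) _

theorem exists_conj_equiv_of_intertwining_ne_zero [Finite (G ⧸ N)] (hσ : IsIrred σ)
    (hσ' : IsIrred σ') {φ : indCarrier N σ →ₗ[ℂ] indCarrier N σ'} (hφ0 : φ ≠ 0)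
    (hφ : ∀ (g : G) (f : indCarrier N σ), φ (indRep N σ g f) = indRep N σ' g (φ f)) :
    ∃ g : G, ∃ e : V' ≃ₗ[ℂ] V,
      ∀ (n : N) (v : V'), e (σ' n v) = σ (conjHom N g n) (e v) := by
  obtain ⟨k, hk⟩ := exists_indEval_comp_indExtZero_ne_zero hφ0 hφ
  have hB := indEval_comp_indExtZero_intertwining hφ k
  let e := LinearEquiv.ofBijective _ <| bijective_of_intertwining_of_ne_zero
    (hσ.comp_surjective (conjHom_surjective N k)) hσ' hk hB
  exact ⟨k, e.symm, symm_intertwining (ρ := σ.comp (conjHom N k)) e hB⟩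

def indConjMap (g : G) (B : V →ₗ[ℂ] V')
    (hB : ∀ n v, B (σ (conjHom N g n) v) = σ' n (B v)) :
    indCarrier N σ →ₗ[ℂ] indCarrier N σ' :=
  LinearMap.codRestrict _
    ((B.compLeft G).comp ((LinearMap.funLeft ℂ V (g⁻¹ * ·)).comp (indCarrier N σ).subtype))
    fun f n x => by
      have hx : g⁻¹ * (n * x) = conjHom N g n * (g⁻¹ * x) := by
        simp only [conjHom, MonoidHom.coe_mk, OneHom.coe_mk]; group
      change B ((f : G → V) (g⁻¹ * (n * x))) = σ' n (B ((f : G → V) (g⁻¹ * x)))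
      rw [hx, indCarrier_apply_mul, hB]

theorem indConjMap_apply (g : G) (B : V →ₗ[ℂ] V')
    (hB : ∀ n v, B (σ (conjHom N g n) v) = σ' n (B v)) (f : indCarrier N σ) (x : G) :
    (indConjMap g B hB f : G → V') x = B ((f : G → V) (g⁻¹ * x)) :=
  rfl

theorem indConjMap_intertwining (g : G) (B : V →ₗ[ℂ] V')
    (hB : ∀ n v, B (σ (conjHom N g n) v) = σ' n (B v)) (h : G) (f : indCarrier N σ) :
    indConjMap g B hB (indRep N σ h f) = indRep N σ' h (indConjMap g B hB f) := by
  ext x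
  simp only [indConjMap_apply, indRep_apply, mul_assoc]

theorem exists_indEquiv_of_conj (g : G) (e : V' ≃ₗ[ℂ] V)
    (he : ∀ (n : N) (v : V'), e (σ' n v) = σ (conjHom N g n) (e v)) :
    ∃ E : indCarrier N σ ≃ₗ[ℂ] indCarrier N σ',
      ∀ (h : G) (f : indCarrier N σ), E (indRep N σ h f) = indRep N σ' h (E f) := by
  have he_symm : ∀ n v, e.symm (σ (conjHom N g n) v) = σ' n (e.symm v) :=
    symm_intertwining (ρ' := σ.comp (conjHom N g)) e he
  have he_inv : ∀ n v, e (σ' (conjHom N g⁻¹ n) v) = σ n (e v) := fun n v => by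
    rw [he, conjHom_conjHom_inv]
  refine ⟨LinearEquiv.ofLinearMap (indConjMap g e.symm.toLinearMap he_symm)
    (indConjMap g⁻¹ e.toLinearMap he_inv) ?_ ?_, indConjMap_intertwining g _ he_symm⟩
  · ext F x
    simp [indConjMap_apply]
  · ext f x
    simp [indConjMap_apply]

end Mackey

end

theorem ind_disjoint_or_iso_and_iso_iff_conjugate_general
    {G : Type} [Group G]
    (N : Subgroup G) [N.Normal]
    [Finite (G ⧸ N)]
    {V V' : Type} [AddCommGroup V] [Module ℂ V]
    [AddCommGroup V'] [Module ℂ V']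
    (σ : Representation ℂ N V) (σ' : Representation ℂ N V')
    (hirr : IsIrred σ) (hirr' : IsIrred σ') :
    -- not disjoint implies isomorphic
    ((∃ φ : indCarrier N σ →ₗ[ℂ] indCarrier N σ', φ ≠ 0 ∧
        ∀ (g : G) (f : indCarrier N σ), φ (indRep N σ g f) = indRep N σ' g (φ f)) →
      (∃ e : indCarrier N σ ≃ₗ[ℂ] indCarrier N σ',
        ∀ (g : G) (f : indCarrier N σ), e (indRep N σ g f) = indRep N σ' g (e f))) ∧
    -- isomorphic iff conjugate
    ((∃ e : indCarrier N σ ≃ₗ[ℂ] indCarrier N σ',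
        ∀ (g : G) (f : indCarrier N σ), e (indRep N σ g f) = indRep N σ' g (e f)) ↔
      (∃ g : G, ∃ e : V' ≃ₗ[ℂ] V,
        ∀ (n : N) (v : V'),
          e (σ' n v) = σ ⟨g⁻¹ * ↑n * g, conjN_mem N n.2 g⟩ (e v))) := by
  refine ⟨fun ⟨φ, hφ0, hφ⟩ => ?_, fun ⟨e, he⟩ => ?_,
    fun ⟨g, e, he⟩ => exists_indEquiv_of_conj g e he⟩
  · obtain ⟨g, e, he⟩ := exists_conj_equiv_of_intertwining_ne_zero hirr hirr' hφ0 hφ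
    exact exists_indEquiv_of_conj g e he
  · have := hirr.1
    have := indCarrier_nontrivial (N := N) (σ := σ)
    exact exists_conj_equiv_of_intertwining_ne_zero hirr hirr'
      (LinearMap.ne_zero_of_injective (f := e.toLinearMap) e.injective) he

/-- Let `G` be locally profinite, `N ⊆ G` an open normal subgroup with `G/N` finite
abelian, and `σ, σ′` smooth finite-dimensional irreducible representations of `N`.
Then `Ind_N^G σ` and `Ind_N^G σ′` are either disjoint or isomorphic, and they are
isomorphic if and only if `σ′ ≅ σ ∘ Ad(g)` for some `g ∈ G`. -/
theorem ind_disjoint_or_iso_and_iso_iff_conjugate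
    {G : Type} [Group G] [TopologicalSpace G] [IsTopologicalGroup G]
    [LocallyCompactSpace G] [TotallyDisconnectedSpace G]
    (N : Subgroup G) [N.Normal] (hNopen : IsOpen (N : Set G))
    [Finite (G ⧸ N)] (habQuot : ∀ x y : G, x * y * x⁻¹ * y⁻¹ ∈ N)
    {V V' : Type} [AddCommGroup V] [Module ℂ V] [FiniteDimensional ℂ V]
    [AddCommGroup V'] [Module ℂ V'] [FiniteDimensional ℂ V']
    (σ : Representation ℂ N V) (σ' : Representation ℂ N V')
    (hsm : IsSmoothRep σ) (hsm' : IsSmoothRep σ')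
    (hirr : IsIrred σ) (hirr' : IsIrred σ') :
    -- not disjoint implies isomorphic
    ((∃ φ : indCarrier N σ →ₗ[ℂ] indCarrier N σ', φ ≠ 0 ∧
        ∀ (g : G) (f : indCarrier N σ), φ (indRep N σ g f) = indRep N σ' g (φ f)) →
      (∃ e : indCarrier N σ ≃ₗ[ℂ] indCarrier N σ',
        ∀ (g : G) (f : indCarrier N σ), e (indRep N σ g f) = indRep N σ' g (e f))) ∧
    -- isomorphic iff conjugate
    ((∃ e : indCarrier N σ ≃ₗ[ℂ] indCarrier N σ',
        ∀ (g : G) (f : indCarrier N σ), e (indRep N σ g f) = indRep N σ' g (e f)) ↔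
      (∃ g : G, ∃ e : V' ≃ₗ[ℂ] V,
        ∀ (n : N) (v : V'),
          e (σ' n v) = σ ⟨g⁻¹ * ↑n * g, conjN_mem N n.2 g⟩ (e v))) :=
  ind_disjoint_or_iso_and_iso_iff_conjugate_general N σ σ' hirr hirr'
end
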